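/- Balance identity for the power system: if (u, m, H̄) is a classical solution of the power-type ergodic MFG system, then ∫_Q [ ½|∇u|²(m+1) + (m−1)(α^q m^q + v) ] dy = 0. -/

import Mathlib

open MeasureTheory Real

/-- Partial derivative in direction `i`. -/
noncomputable def pd {n : ℕ} (i : Fin n) (f : (Fin n → ℝ) → ℝ) (x : Fin n → ℝ) : ℝ :=
  fderiv ℝ f x (Pi.single i 1)

/-- Laplacian: sum of second partial derivatives. -/
noncomputable def lap {n : ℕ} (f : (Fin n → ℝ) → ℝ) (x : Fin n → ℝ) : ℝ :=
  ∑ i, pd i (pd i f) x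

/-- Divergence of a vector field. -/
noncomputable def dvg {n : ℕ} (F : (Fin n → ℝ) → Fin n → ℝ) (x : Fin n → ℝ) : ℝ :=
  ∑ i, pd i (fun y => F y i) x

/-- `ℤⁿ`-periodicity. -/
def ZPeriodic {n : ℕ} (f : (Fin n → ℝ) → ℝ) : Prop :=
  ∀ (k : Fin n → ℤ) (x : Fin n → ℝ), f (x + fun i => (k i : ℝ)) = f x

/-- The unit cube `Q = [0,1]ⁿ`. -/
def unitCube (n : ℕ) : Set (Fin n → ℝ) := Set.Icc 0 1

/-- A classical solution `(u, m, H)` of the power-type ergodic MFG system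
`-Δu + ½|∇u+P|² - v - αᑫ mᑫ = H`, `-Δm - div(m(∇u+P)) = 0`, `∫ u = 0`, `∫ m = 1`. -/
structure PowerMFG {n : ℕ} (v : (Fin n → ℝ) → ℝ) (P : Fin n → ℝ) (α q : ℝ)
    (u m : (Fin n → ℝ) → ℝ) (H : ℝ) : Prop where
  hu : ContDiff ℝ 2 u
  hm : ContDiff ℝ 2 m
  hup : ZPeriodic u
  hmp : ZPeriodic m
  hmpos : ∀ x, 0 < m x
  hHJB : ∀ x, -lap u x + (∑ i, (pd i u x + P i) ^ 2) / 2 - v x - α ^ q * (m x) ^ q = H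
  hFP : ∀ x, -lap m x - dvg (fun y j => m y * (pd j u y + P j)) x = 0
  humean : (∫ y in unitCube n, u y) = 0
  hmmean : (∫ y in unitCube n, m y) = 1

/- ### Auxiliary lemmas -/

lemma pd_cd1 {n : ℕ} (i : Fin n) {f : (Fin n → ℝ) → ℝ} (hf : ContDiff ℝ 2 f) :
    ContDiff ℝ 1 (pd i f) :=
  (hf.fderiv_right (by norm_num)).clm_apply contDiff_const

lemma pd_cont {n : ℕ} (i : Fin n) {f : (Fin n → ℝ) → ℝ} (hf : ContDiff ℝ 1 f) :
    Continuous (pd i f) :=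
  (((hf.fderiv_right (m := 0) (by norm_num)).clm_apply contDiff_const).continuous : _)

lemma pd_add {n : ℕ} (i : Fin n) {f g : (Fin n → ℝ) → ℝ} {x}
    (hf : DifferentiableAt ℝ f x) (hg : DifferentiableAt ℝ g x) :
    pd i (fun y => f y + g y) x = pd i f x + pd i g x := by
  unfold pd; rw [fderiv_fun_add hf hg]; simp

lemma pd_sub {n : ℕ} (i : Fin n) {f g : (Fin n → ℝ) → ℝ} {x}
    (hf : DifferentiableAt ℝ f x) (hg : DifferentiableAt ℝ g x) :
    pd i (fun y => f y - g y) x = pd i f x - pd i g x := by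
  unfold pd; rw [fderiv_fun_sub hf hg]; simp

lemma pd_mul {n : ℕ} (i : Fin n) {f g : (Fin n → ℝ) → ℝ} {x}
    (hf : DifferentiableAt ℝ f x) (hg : DifferentiableAt ℝ g x) :
    pd i (fun y => f y * g y) x = pd i f x * g x + f x * pd i g x := by
  unfold pd; rw [fderiv_fun_mul hf hg]; simp; ring

lemma pd_const {n : ℕ} (i : Fin n) (c : ℝ) (x : Fin n → ℝ) :
    pd i (fun _ => c) x = 0 := by
  unfold pd; rw [fderiv_fun_const]; simp

lemma pd_periodic {n : ℕ} (i : Fin n) {f : (Fin n → ℝ) → ℝ}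
    (hf : Differentiable ℝ f) (hp : ZPeriodic f) : ZPeriodic (pd i f) := by
  intro k x
  set c : Fin n → ℝ := fun j => (k j : ℝ)
  have hfun : (fun y : Fin n → ℝ => f (y + c)) = f := funext fun y => hp k y
  have hd : HasFDerivAt (fun y : Fin n → ℝ => f (y + c)) (fderiv ℝ f (x + c)) x := by
    have h1 : HasFDerivAt (fun y : Fin n → ℝ => y + c)
        (ContinuousLinearMap.id ℝ (Fin n → ℝ)) x := (hasFDerivAt_id x).add_const c
    simpa [Function.comp_def] using (hf (x + c)).hasFDerivAt.comp x h1
  have h2 : fderiv ℝ f x = fderiv ℝ f (x + c) := by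
    conv_lhs => rw [← hfun]
    exact hd.fderiv
  unfold pd
  rw [← h2]

lemma insertNth_one_eq {N : ℕ} (i : Fin (N + 1)) (x : Fin N → ℝ) :
    Fin.insertNth i (1 : ℝ) x
      = Fin.insertNth i 0 x + fun j => (((Pi.single i 1 : Fin (N + 1) → ℤ) j : ℝ)) := by
  funext j
  refine Fin.succAboveCases i ?_ ?_ j
  · simp
  · intro k
    simp [Fin.succAbove_ne i k, Pi.single_eq_of_ne (Fin.succAbove_ne i k)]

lemma integral_dvg_zero {N : ℕ} (F : (Fin (N + 1) → ℝ) → Fin (N + 1) → ℝ)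
    (hF : ∀ j, ContDiff ℝ 1 fun y => F y j) (hFp : ∀ j, ZPeriodic fun y => F y j) :
    ∫ x in unitCube (N + 1), dvg F x = 0 := by
  have hcont : Continuous (dvg F) :=
    continuous_finset_sum _ fun i _ => pd_cont i (hF i)
  have Hi : IntegrableOn
      (fun x => ∑ i, fderiv ℝ (fun y => F y i) x (Pi.single i 1)) (Set.Icc 0 1) volume :=
    hcont.continuousOn.integrableOn_compact isCompact_Icc
  have hdiv := integral_divergence_of_hasFDerivAt_off_countable'
    (0 : Fin (N + 1) → ℝ) (1 : Fin (N + 1) → ℝ) (fun i => zero_le_one)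
    (fun j y => F y j) (fun j x => fderiv ℝ (fun y => F y j) x) ∅ Set.countable_empty
    (fun i => (hF i).continuous.continuousOn)
    (fun x _ i => (((hF i).differentiable one_ne_zero) x).hasFDerivAt) Hi
  have hz : ∀ i : Fin (N + 1),
      ((∫ x in Set.Icc ((0 : Fin (N+1) → ℝ) ∘ i.succAbove) ((1 : Fin (N+1) → ℝ) ∘ i.succAbove),
          F (i.insertNth ((1 : Fin (N+1) → ℝ) i) x) i) -
        ∫ x in Set.Icc ((0 : Fin (N+1) → ℝ) ∘ i.succAbove) ((1 : Fin (N+1) → ℝ) ∘ i.succAbove),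
          F (i.insertNth ((0 : Fin (N+1) → ℝ) i) x) i) = 0 := by
    intro i
    rw [sub_eq_zero]
    have : (fun x : Fin N → ℝ => F (i.insertNth ((1 : Fin (N+1) → ℝ) i) x) i)
        = fun x => F (i.insertNth ((0 : Fin (N+1) → ℝ) i) x) i := by
      funext x
      have h1 : ((1 : Fin (N+1) → ℝ) i) = (1 : ℝ) := rfl
      have h0 : ((0 : Fin (N+1) → ℝ) i) = (0 : ℝ) := rfl
      rw [h1, h0, insertNth_one_eq]
      exact hFp i (Pi.single i 1) _
    rw [this]
  calc ∫ x in unitCube (N + 1), dvg F x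
      = ∫ x in Set.Icc (0 : Fin (N+1) → ℝ) 1,
          ∑ i, fderiv ℝ (fun y => F y i) x (Pi.single i 1) := rfl
    _ = _ := hdiv
    _ = 0 := Finset.sum_eq_zero fun i _ => hz i

/-- Balance identity for the power system. -/
theorem power_mfg_balance_identity {n : ℕ} (hn : 1 ≤ n)
    (v : (Fin n → ℝ) → ℝ) (hv0 : ∀ x, 0 ≤ v x) (hvlip : ∃ K, LipschitzWith K v) (hvper : ZPeriodic v)
    (P : Fin n → ℝ) (α q : ℝ) (hα : 0 ≤ α) (hq : 0 < q)
    (u m : (Fin n → ℝ) → ℝ) (H : ℝ)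
    (h : PowerMFG v P α q u m H) :
    (∫ y in unitCube n,
      ((∑ i, (pd i u y) ^ 2) / 2 * (m y + 1)
        + (m y - 1) * (α ^ q * (m y) ^ q + v y))) = 0 := by
  obtain ⟨N, rfl⟩ : ∃ N, n = N + 1 := ⟨n - 1, by omega⟩
  have hu2 := h.hu
  have hm2 := h.hm
  have h12 : (1 : WithTop ℕ∞) ≤ 2 := by norm_num
  have hud : Differentiable ℝ u := hu2.differentiable two_ne_zero
  have hmd : Differentiable ℝ m := hm2.differentiable two_ne_zero
  have hpu : ∀ j : Fin (N+1), ContDiff ℝ 1 (pd j u) := fun j => pd_cd1 j hu2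
  have hpm : ∀ j : Fin (N+1), ContDiff ℝ 1 (pd j m) := fun j => pd_cd1 j hm2
  have hMB : ∀ j : Fin (N+1), ContDiff ℝ 1 (fun y => m y * (pd j u y + P j)) :=
    fun j => (hm2.of_le h12).mul ((hpu j).add contDiff_const)
  set F : (Fin (N+1) → ℝ) → Fin (N+1) → ℝ := fun y j =>
    u y * (pd j m y + m y * (pd j u y + P j)) + (1 - m y) * pd j u y - u y * P j with hFdef
  have hFj : ∀ j, ContDiff ℝ 1 (fun y => F y j) := by
    intro j
    exact (((hu2.of_le h12).mul ((hpm j).add (hMB j))).add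
      ((contDiff_const.sub (hm2.of_le h12)).mul (hpu j))).sub
      ((hu2.of_le h12).mul contDiff_const)
  have hFp : ∀ j, ZPeriodic (fun y => F y j) := by
    intro j k x
    simp only [hFdef]
    rw [h.hup k x, h.hmp k x, pd_periodic j hud h.hup k x, pd_periodic j hmd h.hmp k x]
  have hterm : ∀ (y : Fin (N+1) → ℝ) (j : Fin (N+1)), pd j (fun z => F z j) y =
      (m y * pd j u y ^ 2 + (m y - 1) * (P j * pd j u y))
      + ((1 - m y) * pd j (pd j u) y
        + u y * (pd j (pd j m) y + pd j (fun z => m z * (pd j u z + P j)) y)) := by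
    intro y j
    have d1 : DifferentiableAt ℝ u y := hud y
    have d2 : DifferentiableAt ℝ m y := hmd y
    have d3 : DifferentiableAt ℝ (pd j u) y := ((hpu j).differentiable one_ne_zero) y
    have d4 : DifferentiableAt ℝ (pd j m) y := ((hpm j).differentiable one_ne_zero) y
    have d5 : DifferentiableAt ℝ (fun z => m z * (pd j u z + P j)) y :=
      ((hMB j).differentiable one_ne_zero) y
    have d6 : DifferentiableAt ℝ (fun z => pd j m z + m z * (pd j u z + P j)) y := d4.add d5
    have d7 : DifferentiableAt ℝ (fun z => 1 - m z) y := (differentiableAt_const 1).sub d2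
    have e1 := pd_sub j
      (f := fun z => u z * (pd j m z + m z * (pd j u z + P j)) + (1 - m z) * pd j u z)
      (g := fun z => u z * P j) (x := y) ((d1.mul d6).add (d7.mul d3))
      (d1.mul (differentiableAt_const _))
    have e2 := pd_add j
      (f := fun z => u z * (pd j m z + m z * (pd j u z + P j)))
      (g := fun z => (1 - m z) * pd j u z) (x := y) (d1.mul d6) (d7.mul d3)
    have e3 := pd_mul j (f := u)
      (g := fun z => pd j m z + m z * (pd j u z + P j)) (x := y) d1 d6
    have e4 := pd_mul j (f := fun z => 1 - m z) (g := pd j u) (x := y) d7 d3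
    have e5 := pd_mul j (f := u) (g := fun _ => P j) (x := y) d1 (differentiableAt_const _)
    have e6 := pd_add j (f := pd j m) (g := fun z => m z * (pd j u z + P j)) (x := y) d4 d5
    have e7 := pd_sub j (f := fun _ => (1:ℝ)) (g := m) (x := y) (differentiableAt_const _) d2
    simp only [hFdef]
    rw [e1, e2, e3, e4, e5, e6, e7, pd_const, pd_const]
    ring
  have hdvg : ∀ y, dvg F y =
      m y * (∑ j, pd j u y ^ 2) + (m y - 1) * (∑ j, P j * pd j u y)
      + (1 - m y) * lap u y
      + u y * (lap m y + dvg (fun z k => m z * (pd k u z + P k)) y) := by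
    intro y
    show (∑ j, pd j (fun z => F z j) y) = _
    rw [Finset.sum_congr rfl fun j _ => hterm y j]
    show _ = m y * (∑ j, pd j u y ^ 2) + (m y - 1) * (∑ j, P j * pd j u y)
      + (1 - m y) * (∑ j, pd j (pd j u) y)
      + u y * ((∑ j, pd j (pd j m) y)
          + ∑ j, pd j (fun z => m z * (pd j u z + P j)) y)
    simp only [mul_add, Finset.sum_add_distrib, Finset.mul_sum]
    ring
  have key : ∀ y, ((∑ i, (pd i u y) ^ 2) / 2 * (m y + 1)
        + (m y - 1) * (α ^ q * (m y) ^ q + v y))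
      = dvg F y + ((∑ i, P i ^ 2) / 2 - H) * (m y - 1) := by
    intro y
    have hjb := h.hHJB y
    have hfp := h.hFP y
    have hS2 : (∑ i, (pd i u y + P i) ^ 2)
        = (∑ i, pd i u y ^ 2) + 2 * (∑ i, P i * pd i u y) + ∑ i, P i ^ 2 := by
      rw [Finset.mul_sum, ← Finset.sum_add_distrib, ← Finset.sum_add_distrib]
      exact Finset.sum_congr rfl fun i _ => by ring
    have hfp' : lap m y + dvg (fun z k => m z * (pd k u z + P k)) y = 0 := by linarith
    have hjb' : α ^ q * (m y) ^ q + v y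
        = - lap u y + (∑ i, (pd i u y + P i) ^ 2) / 2 - H := by linarith
    rw [hdvg y, hjb', hS2, hfp']
    ring
  have hFcont : Continuous (dvg F) := continuous_finset_sum _ fun i _ => pd_cont i (hFj i)
  have hcomp : IsCompact (unitCube (N+1)) := by unfold unitCube; exact isCompact_Icc
  have hi1 : IntegrableOn (fun y => dvg F y) (unitCube (N+1)) :=
    hFcont.continuousOn.integrableOn_compact hcomp
  have hmcont : Continuous m := hm2.continuous
  have hi2 : IntegrableOn
      (fun y => ((∑ i, P i ^ 2) / 2 - H) * (m y - 1)) (unitCube (N+1)) :=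
    (continuous_const.mul (hmcont.sub continuous_const)).continuousOn.integrableOn_compact
      hcomp
  have him : IntegrableOn m (unitCube (N+1)) :=
    hmcont.continuousOn.integrableOn_compact hcomp
  have hic : IntegrableOn (fun _ => (1:ℝ)) (unitCube (N+1)) :=
    continuous_const.continuousOn.integrableOn_compact
      hcomp
  have hIdvg : ∫ y in unitCube (N+1), dvg F y = 0 := integral_dvg_zero F hFj hFp
  have hvol : (volume (unitCube (N+1))).toReal = 1 := by
    rw [show unitCube (N+1) = Set.Icc (0 : Fin (N+1) → ℝ) 1 from rfl,
      Real.volume_Icc_pi_toReal (a := (0 : Fin (N+1) → ℝ)) (b := 1) (by intro i; exact zero_le_one)]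
    simp
  simp only [key]
  rw [integral_add hi1 hi2, hIdvg, MeasureTheory.integral_const_mul,
    integral_sub him hic, h.hmmean, setIntegral_const, measureReal_def, hvol]
  simp
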